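/- arXiv:1804.06540 — 6 statements merged into one kernel-verified Lean document; each statement's English description precedes it below -/
import Mathlib

section
/- Let L be the Laplacian matrix of a connected weighted undirected graph on n ≥ 2 vertices, let v be a vertex, and let L_v be the principal submatrix of L obtained by deleting the row and column indexed by v. Then for every vertex u ≠ v, the resistance distance satisfies R_{uv} = b_{u,v}^T L† b_{u,v} = (L_v^{-1})_{uu}; consequently R_v = Tr(L_v^{-1}). -/
open Matrix

/-- For the Laplacian `L` of a connected weighted undirected graph on `n ≥ 2`
vertices, a vertex `v`, and the principal submatrix `L_v` deleting row and column `v`: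
for every vertex `u ≠ v`, `R_{uv} = b_{u,v}ᵀ L† b_{u,v} = (L_v⁻¹)_{uu}`; consequently
`R_v = Tr(L_v⁻¹)`. -/
theorem resistance_via_grounded_laplacian {n : ℕ} (hn : 2 ≤ n)
    (L : Matrix (Fin n) (Fin n) ℝ)
    (hsym : L.IsSymm)
    (hoff : ∀ i j : Fin n, i ≠ j → L i j ≤ 0)
    (hrow : ∀ i : Fin n, ∑ j, L i j = 0)
    (hker : ∀ x : Fin n → ℝ, L *ᵥ x = 0 ↔ ∃ c : ℝ, x = fun _ => c)
    (J : Matrix (Fin n) (Fin n) ℝ) (hJ : J = of fun _ _ => (1 : ℝ))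
    (Ldag : Matrix (Fin n) (Fin n) ℝ)
    (hLdag : Ldag = (L + (n : ℝ)⁻¹ • J)⁻¹ - (n : ℝ)⁻¹ • J)
    (v : Fin n)
    (Lv : Matrix {u : Fin n // u ≠ v} {u : Fin n // u ≠ v} ℝ)
    (hLv : Lv = L.submatrix (fun i : {u : Fin n // u ≠ v} => (i : Fin n))
      (fun j : {u : Fin n // u ≠ v} => (j : Fin n))) :
    (∀ u : {u : Fin n // u ≠ v},
      (Pi.single (u : Fin n) 1 - Pi.single v 1) ⬝ᵥ
          (Ldag *ᵥ (Pi.single (u : Fin n) 1 - Pi.single v 1)) = Lv⁻¹ u u) ∧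
    ∑ u : Fin n, (Pi.single u 1 - Pi.single v 1) ⬝ᵥ
        (Ldag *ᵥ (Pi.single u 1 - Pi.single v 1)) = (Lv⁻¹).trace := by
  have hn0 : (n : ℝ) ≠ 0 := Nat.cast_ne_zero.mpr (by omega)
  set M := L + (n : ℝ)⁻¹ • J with hM
  -- basic sum splitting
  have split : ∀ f : Fin n → ℝ,
      ∑ j, f j = f v + ∑ j : {j : Fin n // j ≠ v}, f (j : Fin n) := by
    intro f
    rw [Fintype.sum_eq_add_sum_compl v]
    congr 1
    rw [Finset.sum_subtype]
    intro x; simp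
  -- J multiplication
  have hJmul : ∀ x : Fin n → ℝ, J *ᵥ x = fun _ => ∑ j, x j := by
    intro x; funext i; simp [hJ, mulVec, dotProduct]
  -- column sums of L vanish
  have hcol : ∀ j, ∑ i, L i j = 0 := by
    intro j
    calc ∑ i, L i j = ∑ i, L j i := Finset.sum_congr rfl (fun i _ => hsym.apply j i)
    _ = 0 := hrow j
  -- sum of entries of L *ᵥ x vanishes
  have hsum0 : ∀ x : Fin n → ℝ, ∑ i, (L *ᵥ x) i = 0 := by
    intro x
    have h1 : ∑ i, (L *ᵥ x) i = ∑ j, (∑ i, L i j) * x j := by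
      simp only [mulVec, dotProduct]
      rw [Finset.sum_comm]
      simp [Finset.sum_mul]
    rw [h1]
    simp [hcol]
  -- M maps ones to ones
  have hM1 : M *ᵥ (fun _ => (1 : ℝ)) = fun _ => 1 := by
    funext i
    rw [hM, add_mulVec, smul_mulVec, hJmul]
    have hL1 : (L *ᵥ fun _ => (1 : ℝ)) i = 0 := by
      simp [mulVec, dotProduct, hrow i]
    simp only [Pi.add_apply, hL1, Pi.smul_apply, smul_eq_mul, zero_add]
    simp [hn0]
  -- M is invertible
  have hMdet : IsUnit M.det := by
    rw [isUnit_iff_ne_zero]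
    intro h0
    obtain ⟨z, hz, hMz⟩ := (Matrix.exists_mulVec_eq_zero_iff).mpr h0
    have hLz : L *ᵥ z = fun _ => -((n : ℝ)⁻¹ * ∑ j, z j) := by
      have h2 : L *ᵥ z = M *ᵥ z - (n : ℝ)⁻¹ • (J *ᵥ z) := by
        rw [hM, add_mulVec, smul_mulVec]; abel
      rw [h2, hMz, hJmul]; funext i; simp
    have hs := hsum0 z
    rw [hLz] at hs
    simp only [Finset.sum_const, Finset.card_univ, Fintype.card_fin, nsmul_eq_mul] at hs
    have hzsum : ∑ j, z j = 0 := by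
      rcases mul_eq_zero.mp hs with h | h
      · exact absurd h hn0
      · have h' := neg_eq_zero.mp h
        rcases mul_eq_zero.mp h' with h'' | h''
        · exact absurd h'' (inv_ne_zero hn0)
        · exact h''
    have hLz0 : L *ᵥ z = 0 := by rw [hLz]; funext i; simp [hzsum]
    obtain ⟨c, hc⟩ := (hker z).mp hLz0
    have hc0 : c = 0 := by
      have hMzc := hMz
      rw [hc] at hMzc
      have h3 : M *ᵥ (fun _ => c) = fun _ => c := by
        have : (fun _ : Fin n => c) = c • (fun _ : Fin n => (1 : ℝ)) := by
          funext i; simp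
        rw [this, mulVec_smul, hM1]
      rw [h3] at hMzc
      exact congrFun hMzc ⟨0, by omega⟩
    apply hz
    rw [hc, hc0]
    rfl
  -- M⁻¹ maps ones to ones
  have hMinv1 : M⁻¹ *ᵥ (fun _ => (1 : ℝ)) = fun _ => 1 := by
    calc M⁻¹ *ᵥ (fun _ => (1 : ℝ)) = M⁻¹ *ᵥ (M *ᵥ fun _ => 1) := by rw [hM1]
    _ = (M⁻¹ * M) *ᵥ (fun _ => 1) := mulVec_mulVec _ _ _
    _ = fun _ => 1 := by rw [nonsing_inv_mul M hMdet, one_mulVec]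
  -- symmetry of M⁻¹
  have hMsym : Mᵀ = M := by
    rw [hM, transpose_add, transpose_smul, hsym.eq, hJ]
    congr 1
  have hMinvsym : (M⁻¹)ᵀ = M⁻¹ := by rw [transpose_nonsing_inv, hMsym]
  -- sums are preserved by M⁻¹
  have hsumMinv : ∀ w : Fin n → ℝ, ∑ i, (M⁻¹ *ᵥ w) i = ∑ i, w i := by
    intro w
    have h1 : ∑ i, (M⁻¹ *ᵥ w) i = (fun _ => (1 : ℝ)) ⬝ᵥ (M⁻¹ *ᵥ w) := by
      simp [dotProduct]
    rw [h1, dotProduct_mulVec]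
    have h2 : (fun _ => (1 : ℝ)) ᵥ* M⁻¹ = fun _ => 1 := by
      conv_lhs => rw [← hMinvsym]
      rw [vecMul_transpose, hMinv1]
    rw [h2]
    simp [dotProduct]
  -- b sums to zero
  have hbsum : ∀ u : Fin n, ∑ i, (Pi.single u 1 - Pi.single v 1 : Fin n → ℝ) i = 0 := by
    intro u
    simp [Finset.sum_sub_distrib, Pi.single_apply]
  -- dot products with b
  have hdotw : ∀ (u : Fin n) (w : Fin n → ℝ),
      (Pi.single u 1 - Pi.single v 1 : Fin n → ℝ) ⬝ᵥ w = w u - w v := by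
    intro u w
    simp only [dotProduct, Pi.sub_apply, Pi.single_apply, sub_mul, ite_mul, one_mul,
      zero_mul, Finset.sum_sub_distrib]
    rw [Finset.sum_ite_eq' Finset.univ u w, Finset.sum_ite_eq' Finset.univ v w]
    simp
  -- Ldag on zero-sum vectors
  have hLdagb : ∀ bv : Fin n → ℝ, (∑ i, bv i = 0) → Ldag *ᵥ bv = M⁻¹ *ᵥ bv := by
    intro bv hbv
    rw [hLdag, sub_mulVec, smul_mulVec, hJmul]
    funext i
    simp [hbv]
  -- extension
  set ext : ({j : Fin n // j ≠ v} → ℝ) → (Fin n → ℝ) :=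
    fun w i => if h : i = v then 0 else w ⟨i, h⟩ with hext
  have hextval : ∀ (w : {j : Fin n // j ≠ v} → ℝ) (j : {j : Fin n // j ≠ v}),
      ext w (j : Fin n) = w j := fun w j => dif_neg j.prop
  have hextv : ∀ w, ext w v = 0 := fun w => dif_pos rfl
  have hLvapp : ∀ (i j : {j : Fin n // j ≠ v}), Lv i j = L i j := by
    intro i j; rw [hLv]; rfl
  -- L on the extension, off v
  have hextL : ∀ (w : {j : Fin n // j ≠ v} → ℝ) (i : Fin n) (hi : i ≠ v),
      (L *ᵥ ext w) i = (Lv *ᵥ w) ⟨i, hi⟩ := by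
    intro w i hi
    have h1 : (L *ᵥ ext w) i = ∑ j, L i j * ext w j := rfl
    rw [h1, split (fun j => L i j * ext w j)]
    simp only [hextv, mul_zero, zero_add]
    have h2 : (Lv *ᵥ w) ⟨i, hi⟩ = ∑ j : {j : Fin n // j ≠ v}, Lv ⟨i, hi⟩ j * w j := rfl
    rw [h2]
    exact Finset.sum_congr rfl fun j _ => by rw [hextval, hLvapp]
  -- L on the extension, at v
  have hextLv : ∀ (w : {j : Fin n // j ≠ v} → ℝ),
      (L *ᵥ ext w) v = - ∑ j : {j : Fin n // j ≠ v}, (Lv *ᵥ w) j := by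
    intro w
    have h1 := hsum0 (ext w)
    rw [split (fun i => (L *ᵥ ext w) i)] at h1
    have h2 : ∑ j : {j : Fin n // j ≠ v}, (L *ᵥ ext w) (j : Fin n)
        = ∑ j : {j : Fin n // j ≠ v}, (Lv *ᵥ w) j :=
      Finset.sum_congr rfl fun j _ => by rw [hextL w j j.prop]
    rw [h2] at h1
    linarith
  -- Lv is invertible
  have hLvdet : IsUnit Lv.det := by
    rw [isUnit_iff_ne_zero]
    intro h0
    obtain ⟨z, hz, hLvz⟩ := (Matrix.exists_mulVec_eq_zero_iff).mpr h0
    have hLez : L *ᵥ ext z = 0 := by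
      funext i
      by_cases hi : i = v
      · subst hi; rw [hextLv, hLvz]; simp
      · rw [hextL z i hi, hLvz]; rfl
    obtain ⟨c, hc⟩ := (hker _).mp hLez
    have hc0 : c = 0 := by
      have h3 := congrFun hc v
      rw [hextv] at h3
      exact h3.symm
    apply hz
    funext j
    have h4 := congrFun hc (j : Fin n)
    rw [hextval] at h4
    rw [h4, hc0]
    rfl
  -- main claim for each u ≠ v
  have main : ∀ u : {u : Fin n // u ≠ v},
      (Pi.single (u : Fin n) 1 - Pi.single v 1) ⬝ᵥ
          (Ldag *ᵥ (Pi.single (u : Fin n) 1 - Pi.single v 1)) = Lv⁻¹ u u := by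
    intro u
    set b : Fin n → ℝ := Pi.single (u : Fin n) 1 - Pi.single v 1 with hb
    set w : {j : Fin n // j ≠ v} → ℝ := Lv⁻¹ *ᵥ Pi.single u 1 with hw
    have hLvw : Lv *ᵥ w = Pi.single u 1 := by
      rw [hw, mulVec_mulVec, mul_nonsing_inv _ hLvdet, one_mulVec]
    have hLy : L *ᵥ ext w = b := by
      funext i
      by_cases hi : i = v
      · rw [hi, hextLv w, hLvw, hb]
        simp [Pi.single_apply, Ne.symm u.prop]
      · rw [hextL w i hi, hLvw, hb]
        simp only [Pi.sub_apply, Pi.single_apply, hi, if_false, sub_zero]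
        simp [Subtype.ext_iff]
    have hLx : L *ᵥ (Ldag *ᵥ b) = b := by
      rw [hLdagb b (hbsum (u : Fin n))]
      have hL : L = M - (n : ℝ)⁻¹ • J := by rw [hM]; abel
      conv_lhs => rw [hL]
      rw [sub_mulVec, smul_mulVec, mulVec_mulVec, mul_nonsing_inv _ hMdet,
        one_mulVec, hJmul, hsumMinv, hbsum (u : Fin n)]
      funext i; simp
    have hdiff : L *ᵥ (Ldag *ᵥ b - ext w) = 0 := by
      rw [mulVec_sub, hLx, hLy, sub_self]
    obtain ⟨c, hc⟩ := (hker _).mp hdiff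
    have hxy : ∀ i, (Ldag *ᵥ b) i = ext w i + c := by
      intro i
      have h6 := congrFun hc i
      simp only [Pi.sub_apply] at h6
      linarith
    have hbdot : ∀ wv : Fin n → ℝ, b ⬝ᵥ wv = wv (u : Fin n) - wv v :=
      fun wv => hdotw (u : Fin n) wv
    rw [hbdot (Ldag *ᵥ b), hxy (u : Fin n), hxy v, hextv, hextval]
    have hwu : w u = Lv⁻¹ u u := by
      rw [hw]
      simp [mulVec, dotProduct, Pi.single_apply]
    rw [hwu]
    ring
  refine ⟨main, (split _).trans ?_⟩
  simp only [sub_self, Matrix.mulVec_zero, dotProduct_zero, zero_add]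
  simp only [Matrix.trace, Matrix.diag]
  exact Finset.sum_congr rfl fun u _ => main u
end

section
/- Let L be the Laplacian matrix of a connected weighted undirected graph on n ≥ 2 vertices and let B := L + J. Then B is invertible with B^{-1} = L† + (1/n²)J, and for all vertices u, v: (B^{-1})_{uu} + (B^{-1})_{vv} − 2(B^{-1})_{uv} = R_{uv}. Consequently, the information centrality I_v := n / (Σ_u ((B^{-1})_{uu} + (B^{-1})_{vv} − 2(B^{-1})_{uv})) of any vertex v equals n / R_v. -/
/-!
Since `L` kills the constant vector on both sides, `L * J = J * L = 0`, so `L + a • J` acts as `L`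
on the sum-zero vectors and as multiplication by `a * n` on the constants. For `a ≠ 0` it is
therefore invertible (the kernel of `L` is the constants), and the resolvent identity
`A⁻¹ - B⁻¹ = A⁻¹ * (B - A) * B⁻¹`, with `B - A` a multiple of `J`, shows that changing `a` changes
the inverse only by a multiple of `J`. Such multiples are invisible to the quadratic form at
`e_u - e_v`, which yields the resistance formulas.
-/

open Matrix

namespace Matrix

def allOnes (ι 𝕜 : Type*) [One 𝕜] : Matrix ι ι 𝕜 := of fun _ _ => 1

variable {ι 𝕜 : Type*} [Field 𝕜]

@[simp]
lemma allOnes_apply (i j : ι) : allOnes ι 𝕜 i j = 1 := rfl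

lemma isSymm_allOnes : (allOnes ι 𝕜).IsSymm := rfl

variable [Fintype ι]

lemma allOnes_mulVec (x : ι → 𝕜) : allOnes ι 𝕜 *ᵥ x = fun _ => ∑ i, x i := by
  ext; simp [mulVec, dotProduct]

lemma allOnes_mul_allOnes : allOnes ι 𝕜 * allOnes ι 𝕜 = (Fintype.card ι : 𝕜) • allOnes ι 𝕜 := by
  ext; simp [mul_apply]

lemma mul_allOnes_eq_zero {L : Matrix ι ι 𝕜} (h : L *ᵥ 1 = 0) : L * allOnes ι 𝕜 = 0 := by
  ext i j; simpa [mul_apply, mulVec, dotProduct] using congrFun h i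

lemma allOnes_mul_eq_zero {L : Matrix ι ι 𝕜} (h : 1 ᵥ* L = 0) : allOnes ι 𝕜 * L = 0 := by
  ext i j; simpa [mul_apply, vecMul, dotProduct] using congrFun h j

lemma add_smul_allOnes_mul_allOnes {L : Matrix ι ι 𝕜} (hLJ : L * allOnes ι 𝕜 = 0) (a : 𝕜) :
    (L + a • allOnes ι 𝕜) * allOnes ι 𝕜 = (a * Fintype.card ι) • allOnes ι 𝕜 := by
  rw [add_mul, hLJ, smul_mul, allOnes_mul_allOnes, smul_smul, zero_add]

lemma allOnes_mul_add_smul_allOnes {L : Matrix ι ι 𝕜} (hJL : allOnes ι 𝕜 * L = 0) (a : 𝕜) :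
    allOnes ι 𝕜 * (L + a • allOnes ι 𝕜) = (a * Fintype.card ι) • allOnes ι 𝕜 := by
  rw [mul_add, hJL, Matrix.mul_smul, allOnes_mul_allOnes, smul_smul, zero_add]

variable [DecidableEq ι]

lemma inv_mul_eq_inv_smul_of_mul_eq_smul {m : Type*} {A : Matrix ι ι 𝕜} {X : Matrix ι m 𝕜}
    {s : 𝕜} (hA : IsUnit A) (hs : s ≠ 0) (h : A * X = s • X) : A⁻¹ * X = s⁻¹ • X := by
  calc A⁻¹ * X = A⁻¹ * (s⁻¹ • (A * X)) := by rw [h, smul_smul, inv_mul_cancel₀ hs, one_smul]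
    _ = s⁻¹ • X := by
      rw [Matrix.mul_smul, nonsing_inv_mul_cancel_left _ _ ((isUnit_iff_isUnit_det A).1 hA)]

lemma mul_inv_eq_inv_smul_of_mul_eq_smul {m : Type*} {A : Matrix ι ι 𝕜} {X : Matrix m ι 𝕜}
    {s : 𝕜} (hA : IsUnit A) (hs : s ≠ 0) (h : X * A = s • X) : X * A⁻¹ = s⁻¹ • X := by
  calc X * A⁻¹ = (s⁻¹ • (X * A)) * A⁻¹ := by rw [h, smul_smul, inv_mul_cancel₀ hs, one_smul]
    _ = s⁻¹ • X := by
      rw [smul_mul, mul_nonsing_inv_cancel_right _ _ ((isUnit_iff_isUnit_det A).1 hA)]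

lemma single_sub_single_dotProduct_mulVec {R : Type*} [CommRing R] (A : Matrix ι ι R) (u v : ι) :
    (Pi.single u 1 - Pi.single v 1) ⬝ᵥ (A *ᵥ (Pi.single u 1 - Pi.single v 1)) =
      A u u + A v v - A u v - A v u := by
  simp [mulVec_sub, dotProduct_sub, sub_dotProduct]
  ring

section Laplacian

variable [Nonempty ι] [CharZero 𝕜] {L : Matrix ι ι 𝕜}

lemma isUnit_add_smul_allOnes (hJL : allOnes ι 𝕜 * L = 0)
    (hker : ∀ x, L *ᵥ x = 0 → ∃ c : 𝕜, x = fun _ => c) {a : 𝕜} (ha : a ≠ 0) :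
    IsUnit (L + a • allOnes ι 𝕜) := by
  have hn : (Fintype.card ι : 𝕜) ≠ 0 := by simp
  rw [← mulVec_injective_iff_isUnit]
  intro x y hxy
  rw [← sub_eq_zero]
  set z := x - y
  have hz : (L + a • allOnes ι 𝕜) *ᵥ z = 0 := by rw [mulVec_sub, hxy, sub_self]
  have hJz : allOnes ι 𝕜 *ᵥ z = 0 := by
    have := congrArg (allOnes ι 𝕜 *ᵥ ·) hz
    simp only [mulVec_mulVec, allOnes_mul_add_smul_allOnes hJL, smul_mulVec, mulVec_zero] at this
    exact (smul_eq_zero.1 this).resolve_left (mul_ne_zero ha hn)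
  obtain ⟨c, hc⟩ := hker z (by simpa [add_mulVec, smul_mulVec, hJz] using hz)
  have : (Fintype.card ι : 𝕜) * c = 0 := by
    simpa [hc, allOnes_mulVec] using congrFun hJz (Classical.arbitrary ι)
  rw [hc, (mul_eq_zero.1 this).resolve_left hn]
  rfl

lemma inv_add_smul_allOnes (hLJ : L * allOnes ι 𝕜 = 0) (hJL : allOnes ι 𝕜 * L = 0)
    (hker : ∀ x, L *ᵥ x = 0 → ∃ c : 𝕜, x = fun _ => c) {a b : 𝕜} (ha : a ≠ 0) (hb : b ≠ 0) :
    (L + b • allOnes ι 𝕜)⁻¹ = (L + a • allOnes ι 𝕜)⁻¹ - (a * Fintype.card ι ^ 2)⁻¹ • allOnes ι 𝕜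
      + (b * Fintype.card ι ^ 2)⁻¹ • allOnes ι 𝕜 := by
  have hn : (Fintype.card ι : 𝕜) ≠ 0 := by simp
  have hA := isUnit_add_smul_allOnes hJL hker ha
  have hB := isUnit_add_smul_allOnes hJL hker hb
  have hAJ := inv_mul_eq_inv_smul_of_mul_eq_smul hA (mul_ne_zero ha hn)
    (add_smul_allOnes_mul_allOnes hLJ a)
  have hJB := mul_inv_eq_inv_smul_of_mul_eq_smul hB (mul_ne_zero hb hn)
    (allOnes_mul_add_smul_allOnes hJL b)
  have hres := inv_sub_inv (iff_of_true hA hB)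
  rw [add_sub_add_left_eq_sub, ← sub_smul, Matrix.mul_smul, smul_mul, hAJ, smul_mul, hJB,
    smul_smul, smul_smul] at hres
  have hcoeff : (b - a) * (a * Fintype.card ι)⁻¹ * (b * Fintype.card ι)⁻¹ =
      (a * Fintype.card ι ^ 2)⁻¹ - (b * Fintype.card ι ^ 2)⁻¹ := by
    field_simp
  rw [hcoeff, sub_smul] at hres
  rw [sub_add, ← hres, sub_sub_cancel]

end Laplacian

end Matrix

theorem information_centrality_eq_general {n : ℕ} (hn : 2 ≤ n)
    (L : Matrix (Fin n) (Fin n) ℝ)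
    (hsym : L.IsSymm)
    (hker : ∀ x : Fin n → ℝ, L *ᵥ x = 0 ↔ ∃ c : ℝ, x = fun _ => c)
    (J : Matrix (Fin n) (Fin n) ℝ) (hJ : J = of fun _ _ => (1 : ℝ))
    (Ldag : Matrix (Fin n) (Fin n) ℝ)
    (hLdag : Ldag = (L + (n : ℝ)⁻¹ • J)⁻¹ - (n : ℝ)⁻¹ • J)
    (B : Matrix (Fin n) (Fin n) ℝ) (hB : B = L + J) :
    IsUnit B ∧
    B⁻¹ = Ldag + ((n : ℝ) ^ 2)⁻¹ • J ∧
    (∀ u v : Fin n, B⁻¹ u u + B⁻¹ v v - 2 * B⁻¹ u v =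
      (Pi.single u 1 - Pi.single v 1) ⬝ᵥ (Ldag *ᵥ (Pi.single u 1 - Pi.single v 1))) ∧
    (∀ v : Fin n,
      (n : ℝ) / (∑ u : Fin n, (B⁻¹ u u + B⁻¹ v v - 2 * B⁻¹ u v)) =
      (n : ℝ) / (∑ u : Fin n, (Pi.single u 1 - Pi.single v 1) ⬝ᵥ
        (Ldag *ᵥ (Pi.single u 1 - Pi.single v 1)))) := by
  obtain rfl : J = allOnes (Fin n) ℝ := hJ
  have : Nonempty (Fin n) := ⟨⟨0, by omega⟩⟩
  have hn0 : (n : ℝ) ≠ 0 := by positivity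
  have hL1 : L *ᵥ 1 = 0 := (hker 1).2 ⟨1, rfl⟩
  have hLJ := mul_allOnes_eq_zero hL1
  have hJL := allOnes_mul_eq_zero (L := L) (by rwa [← hsym.eq, vecMul_transpose])
  have hker' x := (hker x).1
  have hBunit : IsUnit B := by
    simpa [hB] using isUnit_add_smul_allOnes hJL hker' one_ne_zero
  have hBinv : B⁻¹ = Ldag + ((n : ℝ) ^ 2)⁻¹ • allOnes (Fin n) ℝ := by
    have := inv_add_smul_allOnes hLJ hJL hker' (inv_ne_zero hn0) one_ne_zero
    rwa [one_smul, Fintype.card_fin, one_mul, ← hB, sq, inv_mul_cancel_left₀ hn0, ← hLdag, ← sq]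
      at this
  have hLdag_symm : Ldag.IsSymm :=
    hLdag ▸ (hsym.add (isSymm_allOnes.smul _)).inv.sub (isSymm_allOnes.smul _)
  have hR (u v : Fin n) : B⁻¹ u u + B⁻¹ v v - 2 * B⁻¹ u v =
      (Pi.single u 1 - Pi.single v 1) ⬝ᵥ (Ldag *ᵥ (Pi.single u 1 - Pi.single v 1)) := by
    rw [single_sub_single_dotProduct_mulVec, hBinv, hLdag_symm.apply u v]
    simp only [Matrix.add_apply, Matrix.smul_apply, allOnes_apply, smul_eq_mul]
    ring
  exact ⟨hBunit, hBinv, hR, fun v => by simp only [hR]⟩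

/-- For the Laplacian `L` of a connected weighted undirected graph on `n ≥ 2`
vertices and `B := L + J`, the matrix `B` is invertible with `B⁻¹ = L† + (1/n²)J`, for all
vertices `u, v` we have `(B⁻¹)_{uu} + (B⁻¹)_{vv} − 2(B⁻¹)_{uv} = R_{uv}`, and consequently
the information centrality `I_v = n / Σ_u ((B⁻¹)_{uu} + (B⁻¹)_{vv} − 2(B⁻¹)_{uv})` equals
`n / R_v`. -/
theorem information_centrality_eq {n : ℕ} (hn : 2 ≤ n)
    (L : Matrix (Fin n) (Fin n) ℝ)
    (hsym : L.IsSymm)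
    (hoff : ∀ i j : Fin n, i ≠ j → L i j ≤ 0)
    (hrow : ∀ i : Fin n, ∑ j, L i j = 0)
    (hker : ∀ x : Fin n → ℝ, L *ᵥ x = 0 ↔ ∃ c : ℝ, x = fun _ => c)
    (J : Matrix (Fin n) (Fin n) ℝ) (hJ : J = of fun _ _ => (1 : ℝ))
    (Ldag : Matrix (Fin n) (Fin n) ℝ)
    (hLdag : Ldag = (L + (n : ℝ)⁻¹ • J)⁻¹ - (n : ℝ)⁻¹ • J)
    (B : Matrix (Fin n) (Fin n) ℝ) (hB : B = L + J) :
    IsUnit B ∧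
    B⁻¹ = Ldag + ((n : ℝ) ^ 2)⁻¹ • J ∧
    (∀ u v : Fin n, B⁻¹ u u + B⁻¹ v v - 2 * B⁻¹ u v =
      (Pi.single u 1 - Pi.single v 1) ⬝ᵥ (Ldag *ᵥ (Pi.single u 1 - Pi.single v 1))) ∧
    (∀ v : Fin n,
      (n : ℝ) / (∑ u : Fin n, (B⁻¹ u u + B⁻¹ v v - 2 * B⁻¹ u v)) =
      (n : ℝ) / (∑ u : Fin n, (Pi.single u 1 - Pi.single v 1) ⬝ᵥ
        (Ldag *ᵥ (Pi.single u 1 - Pi.single v 1)))) :=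
  information_centrality_eq_general hn L hsym hker J hJ Ldag hLdag B hB
end

section
/- (Theorem 2, supermodularity.) Let L be the Laplacian matrix of a connected weighted undirected graph on n ≥ 2 vertices, let v be a vertex, and let E_v be a finite set of candidate new edges, each edge e ∈ E_v joining v to some vertex u_e ≠ v and carrying a weight w(e) > 0. For S ⊆ E_v, define L(S) := L + Σ_{e∈S} w(e) b_{u_e,v} b_{u_e,v}^T and R(S) := Tr( (L(S)_v)^{-1} ). Then R is supermodular: for all S ⊆ T ⊆ E_v and every e ∈ E_v \ T, R(T) − R(T ∪ {e}) ≤ R(S) − R(S ∪ {e}). -/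
/-!
Deleting the row and column of `v` turns `L(S)` into `L_v + D(S)`, where `D(S)` is a nonnegative
diagonal matrix, additive in `S`, and `L_v` is a Stieltjes matrix: positive definite (the Laplacian
is diagonally dominant, hence positive semidefinite by Gershgorin, and its kernel consists of the
constants) with nonpositive off-diagonal entries. A Stieltjes matrix has an entrywise nonnegative
inverse: if `A z ≥ 0` then `z⁻ᵀ A z⁻ ≤ z⁻ᵀ A z⁺ ≤ 0`, so `z⁻ = 0`.

For a Stieltjes `A` and nonnegative diagonal `P`, `Q`, the resolvent identity
`X⁻¹ - Y⁻¹ = X⁻¹ (Y - X) Y⁻¹` and cyclicity of the trace give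
`(Tr A⁻¹ - Tr (A+P)⁻¹) - (Tr (A+Q)⁻¹ - Tr (A+Q+P)⁻¹) = Tr (P ((A+P)⁻¹ A⁻¹ - (A+Q+P)⁻¹ (A+Q)⁻¹))`,
and `(A+P)⁻¹ A⁻¹ - (A+Q+P)⁻¹ (A+Q)⁻¹ = (A+P)⁻¹ A⁻¹ Q (A+Q)⁻¹ + (A+P)⁻¹ Q (A+Q+P)⁻¹ (A+Q)⁻¹`
is entrywise nonnegative. Take `A = L(S)_v`, `P` the contribution of `e` and `Q` that of `T \ S`.
-/

open Matrix

namespace Matrix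

variable {m : Type*}

theorem diagonal_apply_nonneg [DecidableEq m] {p : m → ℝ} (hp : 0 ≤ p) (i j : m) :
    0 ≤ diagonal p i j := by
  rw [diagonal_apply]
  split_ifs
  exacts [hp i, le_rfl]

section Nonneg

variable [Fintype m]

theorem trace_nonneg_of_nonneg {A : Matrix m m ℝ} (hA : ∀ i j, 0 ≤ A i j) : 0 ≤ A.trace :=
  Finset.sum_nonneg fun i _ => hA i i

theorem mul_apply_nonneg {A B : Matrix m m ℝ} (hA : ∀ i j, 0 ≤ A i j) (hB : ∀ i j, 0 ≤ B i j)
    (i j : m) : 0 ≤ (A * B) i j :=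
  Finset.sum_nonneg fun k _ => mul_nonneg (hA i k) (hB k j)

end Nonneg

structure IsStieltjes (A : Matrix m m ℝ) : Prop where
  posDef : A.PosDef
  offDiag_nonpos : ∀ i j, i ≠ j → A i j ≤ 0

namespace IsStieltjes

variable {A : Matrix m m ℝ}

theorem add_diagonal [DecidableEq m] (hA : A.IsStieltjes) {p : m → ℝ} (hp : 0 ≤ p) :
    (A + diagonal p).IsStieltjes where
  posDef := hA.posDef.add_posSemidef (PosSemidef.diagonal hp)
  offDiag_nonpos i j hij := by
    simpa only [add_apply, diagonal_apply_ne _ hij, add_zero] using hA.offDiag_nonpos i j hij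

variable [Fintype m]

theorem isUnit [DecidableEq m] (hA : A.IsStieltjes) : IsUnit A :=
  hA.posDef.isUnit

theorem nonneg_of_mulVec_nonneg (hA : A.IsStieltjes) {z : m → ℝ} (hz : 0 ≤ A *ᵥ z) :
    0 ≤ z := by
  have hpos : 0 ≤ z⁻ ⬝ᵥ A *ᵥ z := dotProduct_nonneg_of_nonneg (negPart_nonneg z) hz
  have hcross : z⁻ ⬝ᵥ A *ᵥ z⁺ ≤ 0 := by
    refine Finset.sum_nonpos fun i _ => ?_
    rw [mulVec, dotProduct, Finset.mul_sum]
    refine Finset.sum_nonpos fun j _ => ?_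
    rcases eq_or_ne i j with rfl | hij
    · rcases le_total 0 (z i) with h | h
      · simp [negPart_eq_zero.mpr h]
      · simp [posPart_eq_zero.mpr h]
    · rw [Pi.negPart_apply, Pi.posPart_apply, mul_left_comm]
      exact mul_nonpos_of_nonpos_of_nonneg (hA.offDiag_nonpos i j hij)
        (mul_nonneg (negPart_nonneg _) (posPart_nonneg _))
  have hneg : z⁻ ⬝ᵥ A *ᵥ z⁻ ≤ 0 := by
    have hsplit : z⁺ - z = z⁻ := by linear_combination posPart_sub_negPart z
    have : z⁻ ⬝ᵥ A *ᵥ z⁻ = z⁻ ⬝ᵥ A *ᵥ z⁺ - z⁻ ⬝ᵥ A *ᵥ z := by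
      rw [← dotProduct_sub, ← mulVec_sub, hsplit]
    linarith
  have hzero : z⁻ = 0 := by
    by_contra hne
    have := hA.posDef.dotProduct_mulVec_pos hne
    rw [star_trivial] at this
    linarith
  rw [← posPart_sub_negPart z, hzero, sub_zero]
  exact posPart_nonneg z

theorem inv_nonneg [DecidableEq m] (hA : A.IsStieltjes) (i j : m) : 0 ≤ A⁻¹ i j := by
  have hcol : A *ᵥ A⁻¹.col j = Pi.single j 1 := by
    rw [← mulVec_single_one, mulVec_mulVec,
      mul_nonsing_inv _ (A.isUnit_iff_isUnit_det.mp hA.isUnit), one_mulVec]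
  exact hA.nonneg_of_mulVec_nonneg (hcol ▸ Pi.single_nonneg.mpr zero_le_one) i

theorem inv_sub_inv_add_diagonal [DecidableEq m] (hA : A.IsStieltjes) {p : m → ℝ} (hp : 0 ≤ p) :
    A⁻¹ - (A + diagonal p)⁻¹ = A⁻¹ * diagonal p * (A + diagonal p)⁻¹ := by
  rw [inv_sub_inv (iff_of_true hA.isUnit (hA.add_diagonal hp).isUnit), add_sub_cancel_left]

theorem inv_sub_inv_add_diagonal_nonneg [DecidableEq m] (hA : A.IsStieltjes) {p : m → ℝ}
    (hp : 0 ≤ p) (i j : m) : 0 ≤ (A⁻¹ - (A + diagonal p)⁻¹) i j := by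
  rw [hA.inv_sub_inv_add_diagonal hp]
  exact mul_apply_nonneg (mul_apply_nonneg hA.inv_nonneg (diagonal_apply_nonneg hp))
    (hA.add_diagonal hp).inv_nonneg i j

theorem trace_inv_sub_trace_inv_add_diagonal [DecidableEq m] (hA : A.IsStieltjes) {p : m → ℝ}
    (hp : 0 ≤ p) :
    A⁻¹.trace - (A + diagonal p)⁻¹.trace = (diagonal p * ((A + diagonal p)⁻¹ * A⁻¹)).trace := by
  rw [← trace_sub, hA.inv_sub_inv_add_diagonal hp, trace_mul_cycle, trace_mul_comm]

theorem trace_inv_add_diagonal_supermodular [DecidableEq m] (hA : A.IsStieltjes) {p q : m → ℝ}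
    (hp : 0 ≤ p) (hq : 0 ≤ q) :
    (A + diagonal q)⁻¹.trace - (A + diagonal q + diagonal p)⁻¹.trace
      ≤ A⁻¹.trace - (A + diagonal p)⁻¹.trace := by
  have hB := hA.add_diagonal hp
  have hC := hA.add_diagonal hq
  have hdiff : ∀ i j, 0 ≤ ((A + diagonal p)⁻¹ * A⁻¹
      - (A + diagonal q + diagonal p)⁻¹ * (A + diagonal q)⁻¹) i j := by
    have hsplit : (A + diagonal p)⁻¹ * A⁻¹ - (A + diagonal q + diagonal p)⁻¹ * (A + diagonal q)⁻¹
        = (A + diagonal p)⁻¹ * (A⁻¹ - (A + diagonal q)⁻¹)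
          + ((A + diagonal p)⁻¹ - (A + diagonal p + diagonal q)⁻¹) * (A + diagonal q)⁻¹ := by
      rw [add_right_comm A (diagonal p)]
      noncomm_ring
    rw [hsplit]
    exact fun i j => add_nonneg
      (mul_apply_nonneg hB.inv_nonneg (hA.inv_sub_inv_add_diagonal_nonneg hq) i j)
      (mul_apply_nonneg (hB.inv_sub_inv_add_diagonal_nonneg hq) hC.inv_nonneg i j)
  rw [hC.trace_inv_sub_trace_inv_add_diagonal hp, hA.trace_inv_sub_trace_inv_add_diagonal hp,
    ← sub_nonneg, ← trace_sub, ← mul_sub]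
  exact trace_nonneg_of_nonneg (mul_apply_nonneg (diagonal_apply_nonneg hp) hdiff)

end IsStieltjes

section Laplacian

variable [Fintype m] [DecidableEq m]

theorem IsHermitian.posSemidef_of_sum_abs_le_diag {A : Matrix m m ℝ} (hA : A.IsHermitian)
    (hdom : ∀ k, ∑ j ∈ Finset.univ.erase k, |A k j| ≤ A k k) : A.PosSemidef := by
  refine hA.posSemidef_iff_eigenvalues_nonneg.mpr fun i => show 0 ≤ hA.eigenvalues i from ?_
  have hμ : Module.End.HasEigenvalue (toLin' A) (hA.eigenvalues i) := by
    rw [Module.End.hasEigenvalue_iff_mem_spectrum, spectrum_toLin']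
    exact hA.eigenvalues_mem_spectrum_real i
  obtain ⟨k, hk⟩ := eigenvalue_mem_ball hμ
  rw [Metric.mem_closedBall, Real.dist_eq] at hk
  simp only [Real.norm_eq_abs] at hk
  linarith [(abs_sub_le_iff.mp hk).2, hdom k]

theorem posSemidef_of_offDiag_nonpos_of_sum_eq_zero {L : Matrix m m ℝ} (hsym : L.IsSymm)
    (hoff : ∀ i j, i ≠ j → L i j ≤ 0) (hrow : ∀ i, ∑ j, L i j = 0) : L.PosSemidef := by
  refine (isHermitian_iff_isSymm.mpr hsym).posSemidef_of_sum_abs_le_diag fun k => ?_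
  have hsum : L k k + ∑ j ∈ Finset.univ.erase k, L k j = 0 := by
    rw [Finset.add_sum_erase _ _ (Finset.mem_univ k), hrow k]
  have habs : ∑ j ∈ Finset.univ.erase k, |L k j| = -∑ j ∈ Finset.univ.erase k, L k j := by
    rw [← Finset.sum_neg_distrib]
    exact Finset.sum_congr rfl fun j hj => abs_of_nonpos (hoff k j (Finset.ne_of_mem_erase hj).symm)
  linarith

theorem PosSemidef.posDef_submatrix_ne {L : Matrix m m ℝ} (hL : L.PosSemidef)
    (hker : ∀ x, L *ᵥ x = 0 → ∃ c : ℝ, x = fun _ => c) (v : m) :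
    (L.submatrix ((↑) : {u // u ≠ v} → m) (↑)).PosDef := by
  refine posDef_iff_dotProduct_mulVec.mpr ⟨hL.isHermitian.submatrix _, fun z hz => ?_⟩
  set x : m → ℝ := Function.extend Subtype.val z 0
  have hx : ∀ u : {u // u ≠ v}, x u = z u := Subtype.val_injective.extend_apply z 0
  have hxv : x v = 0 := Function.extend_apply' _ _ _ fun ⟨u, hu⟩ => u.2 hu
  have hquad : star z ⬝ᵥ (L.submatrix (↑) (↑) *ᵥ z) = star x ⬝ᵥ (L *ᵥ x) := by
    simp only [star_trivial, dotProduct, mulVec, Fintype.sum_eq_add_sum_subtype_ne _ v, hxv,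
      hx, submatrix_apply, mul_zero, zero_mul, zero_add]
  rw [hquad]
  refine lt_of_le_of_ne (hL.dotProduct_mulVec_nonneg x) fun h0 => hz ?_
  obtain ⟨c, hc⟩ := hker x ((hL.dotProduct_mulVec_zero_iff x).mp h0.symm)
  have hc0 : c = 0 := by simpa [hxv] using (congrFun hc v).symm
  ext u
  rw [← hx u, hc, hc0, Pi.zero_apply]

end Laplacian

section Edges

variable [DecidableEq m] {R : Type*} [Ring R]

theorem submatrix_vecMulVec_single_sub_single {u v : m} (hu : u ≠ v) :
    (vecMulVec (Pi.single u 1 - Pi.single v 1) (Pi.single u 1 - Pi.single v 1)).submatrix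
      ((↑) : {x // x ≠ v} → m) (↑) = diagonal (Pi.single ⟨u, hu⟩ (1 : R)) := by
  ext i j
  simp only [submatrix_apply, vecMulVec_apply, diagonal_apply, Pi.sub_apply, Pi.single_apply,
    i.2, j.2, Subtype.ext_iff, if_false, sub_zero]
  split_ifs <;> simp_all

theorem submatrix_add_sum_vecMulVec_single_sub_single {ι : Type*} (L : Matrix m m R) {v : m}
    (u : ι → m) (hu : ∀ e, u e ≠ v) (w : ι → R) (S : Finset ι) :
    (L + ∑ e ∈ S, w e • vecMulVec (Pi.single (u e) 1 - Pi.single v 1)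
        (Pi.single (u e) 1 - Pi.single v 1)).submatrix ((↑) : {x // x ≠ v} → m) (↑)
      = L.submatrix (↑) (↑) + diagonal (∑ e ∈ S, w e • Pi.single ⟨u e, hu e⟩ 1) := by
  have hdiag : diagonal (∑ e ∈ S, w e • Pi.single (⟨u e, hu e⟩ : {x // x ≠ v}) 1)
      = ∑ e ∈ S, w e • diagonal (Pi.single (⟨u e, hu e⟩ : {x // x ≠ v}) (1 : R)) := by
    simp only [← diagonal_smul]
    exact map_sum (diagonalAddMonoidHom _ R) _ S
  ext i j
  simp only [hdiag, submatrix_apply, Matrix.add_apply, Matrix.sum_apply, Matrix.smul_apply,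
    ← submatrix_vecMulVec_single_sub_single (hu _)]

end Edges

end Matrix

theorem resistance_supermodular_general {n : ℕ}
    (L : Matrix (Fin n) (Fin n) ℝ)
    (hsym : L.IsSymm)
    (hoff : ∀ i j : Fin n, i ≠ j → L i j ≤ 0)
    (hrow : ∀ i : Fin n, ∑ j, L i j = 0)
    (hker : ∀ x : Fin n → ℝ, L *ᵥ x = 0 ↔ ∃ c : ℝ, x = fun _ => c)
    (v : Fin n)
    {ι : Type*} [DecidableEq ι]
    (uE : ι → Fin n) (huE : ∀ e : ι, uE e ≠ v)
    (w : ι → ℝ) (hw : ∀ e : ι, 0 < w e)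
    (LS : Finset ι → Matrix (Fin n) (Fin n) ℝ)
    (hLS : ∀ S : Finset ι, LS S = L + ∑ e ∈ S, w e •
      vecMulVec (Pi.single (uE e) 1 - Pi.single v 1) (Pi.single (uE e) 1 - Pi.single v 1))
    (R : Finset ι → ℝ)
    (hR : ∀ S : Finset ι, R S = (((LS S).submatrix
      (fun i : {u : Fin n // u ≠ v} => (i : Fin n))
      (fun j : {u : Fin n // u ≠ v} => (j : Fin n)))⁻¹).trace) :
    ∀ S T : Finset ι, S ⊆ T → ∀ e : ι, e ∉ T →
      R T - R (insert e T) ≤ R S - R (insert e S) := by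
  set Lv := L.submatrix (Subtype.val : {u : Fin n // u ≠ v} → Fin n) Subtype.val
  set d : Finset ι → {u : Fin n // u ≠ v} → ℝ := fun S => ∑ e ∈ S, w e • Pi.single ⟨uE e, huE e⟩ 1
  have hLv : Lv.IsStieltjes :=
    ⟨(posSemidef_of_offDiag_nonpos_of_sum_eq_zero hsym hoff hrow).posDef_submatrix_ne
      (fun x => (hker x).mp) v, fun i j hij => hoff i j (Subtype.coe_injective.ne hij)⟩
  have hd : ∀ S, 0 ≤ d S := fun S =>
    Finset.sum_nonneg fun e _ => smul_nonneg (hw e).le (Pi.single_nonneg.mpr zero_le_one)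
  have hRd : ∀ S, R S = (Lv + diagonal (d S))⁻¹.trace := fun S => by
    rw [hR, hLS, submatrix_add_sum_vecMulVec_single_sub_single L uE huE]
  intro S T hST e heT
  have hT : d T = d S + d (T \ S) := by
    simp only [d, ← Finset.sum_sdiff hST, add_comm]
  have hins : ∀ U, e ∉ U → d (insert e U) = d U + d {e} := fun U heU => by
    simp only [d, Finset.sum_insert heU, Finset.sum_singleton, add_comm]
  have hdiag : ∀ a b : {u : Fin n // u ≠ v} → ℝ, diagonal (a + b) = diagonal a + diagonal b :=
    fun a b => (diagonal_add a b).symm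
  rw [hRd, hRd, hRd, hRd, hins T heT, hins S (fun h => heT (hST h)), hT]
  simpa only [hdiag, ← add_assoc] using
    (hLv.add_diagonal (hd S)).trace_inv_add_diagonal_supermodular (hd {e}) (hd (T \ S))

/-- Theorem 2, supermodularity: Let `L` be the Laplacian of a connected
weighted undirected graph on `n ≥ 2` vertices, `v` a vertex, and `E_v` a finite set of
candidate new edges, each edge `e` joining `v` to some vertex `uE e ≠ v` with weight
`w e > 0`. With `L(S) := L + Σ_{e∈S} w(e) b_{u_e,v} b_{u_e,v}ᵀ` and
`R(S) := Tr((L(S)_v)⁻¹)`, the function `R` is supermodular: for all `S ⊆ T` and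
`e ∉ T`, `R(T) − R(T ∪ {e}) ≤ R(S) − R(S ∪ {e})`. -/
theorem resistance_supermodular {n : ℕ} (hn : 2 ≤ n)
    (L : Matrix (Fin n) (Fin n) ℝ)
    (hsym : L.IsSymm)
    (hoff : ∀ i j : Fin n, i ≠ j → L i j ≤ 0)
    (hrow : ∀ i : Fin n, ∑ j, L i j = 0)
    (hker : ∀ x : Fin n → ℝ, L *ᵥ x = 0 ↔ ∃ c : ℝ, x = fun _ => c)
    (v : Fin n)
    {ι : Type*} [Fintype ι] [DecidableEq ι]
    (uE : ι → Fin n) (huE : ∀ e : ι, uE e ≠ v)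
    (w : ι → ℝ) (hw : ∀ e : ι, 0 < w e)
    (LS : Finset ι → Matrix (Fin n) (Fin n) ℝ)
    (hLS : ∀ S : Finset ι, LS S = L + ∑ e ∈ S, w e •
      vecMulVec (Pi.single (uE e) 1 - Pi.single v 1) (Pi.single (uE e) 1 - Pi.single v 1))
    (R : Finset ι → ℝ)
    (hR : ∀ S : Finset ι, R S = (((LS S).submatrix
      (fun i : {u : Fin n // u ≠ v} => (i : Fin n))
      (fun j : {u : Fin n // u ≠ v} => (j : Fin n)))⁻¹).trace) :
    ∀ S T : Finset ι, S ⊆ T → ∀ e : ι, e ∉ T →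
      R T - R (insert e T) ≤ R S - R (insert e S) :=
  resistance_supermodular_general L hsym hoff hrow hker v uE huE w hw LS hLS R hR
end

section
/- Let M be an n×n real symmetric positive definite matrix whose off-diagonal entries are all nonpositive (a symmetric nonsingular M-matrix). Let P be an n×n nonnegative diagonal matrix, let w ≥ 0, let u be an index, and let E_{uu} be the matrix with a 1 in position (u,u) and zeros elsewhere. Then Tr((M + P)^{-1}) − Tr((M + P + w E_{uu})^{-1}) ≤ Tr(M^{-1}) − Tr((M + w E_{uu})^{-1}). -/
/-!
Let `A` be a positive definite Z-matrix and `A x ≥ 0`. With `y = x⁻`, the vectors `y` and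
`x + y = x⁺` have disjoint supports, so `y ⬝ A (x + y) ≤ 0` since only off-diagonal entries
contribute; as `y ⬝ A x ≥ 0` this gives `y ⬝ A y ≤ 0`, hence `y = 0` and `x ≥ 0`. Thus `A⁻¹ ≥ 0`,
and the resolvent identity `A⁻¹ - B⁻¹ = A⁻¹ (B - A) B⁻¹` makes `A ↦ A⁻¹` entrywise antitone on
such matrices. Finally `Tr A⁻¹ - Tr (A + w E_uu)⁻¹ = w ∑ᵢ (A + w E_uu)⁻¹_{ui} A⁻¹_{iu}`, and
replacing `A` by `A + P` decreases both nonnegative factors of every summand.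
-/

open Matrix

namespace Matrix

variable {ι : Type*}

def IsZMatrix (M : Matrix ι ι ℝ) : Prop :=
  Pairwise fun i j => M i j ≤ 0

namespace IsZMatrix

variable {M : Matrix ι ι ℝ}

theorem add_diagonal [DecidableEq ι] (hM : M.IsZMatrix) (d : ι → ℝ) :
    (M + diagonal d).IsZMatrix := fun i j hij => by
  simpa [diagonal_apply_ne _ hij] using hM hij

variable [Fintype ι]

theorem dotProduct_mulVec_nonpos (hM : M.IsZMatrix) {y z : ι → ℝ} (hy : 0 ≤ y) (hz : 0 ≤ z)
    (hyz : ∀ i, y i * z i = 0) : y ⬝ᵥ (M *ᵥ z) ≤ 0 := by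
  simp only [dotProduct, mulVec, Finset.mul_sum]
  refine Finset.sum_nonpos fun i _ => Finset.sum_nonpos fun j _ => ?_
  rcases eq_or_ne i j with rfl | hij
  · rw [mul_left_comm, hyz, mul_zero]
  · exact mul_nonpos_of_nonneg_of_nonpos (hy i) (mul_nonpos_of_nonpos_of_nonneg (hM hij) (hz j))

theorem nonneg_of_mulVec_nonneg (hZ : M.IsZMatrix) (hM : M.PosDef) {x : ι → ℝ}
    (hx : 0 ≤ M *ᵥ x) : 0 ≤ x := by
  set y : ι → ℝ := fun i => max (-x i) 0 with hy_def
  have hy : 0 ≤ y := fun i => le_max_right _ _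
  have hxy : 0 ≤ x + y := fun i => by
    simp only [Pi.add_apply, Pi.zero_apply, hy_def]
    linarith [le_max_left (-x i) 0]
  have hdisj : ∀ i, y i * (x + y) i = 0 := fun i => by
    rcases le_total 0 (x i) with h | h <;> simp [hy_def, h]
  have hyMy : y ⬝ᵥ (M *ᵥ y) ≤ 0 := by
    have h := hZ.dotProduct_mulVec_nonpos hy hxy hdisj
    rw [mulVec_add, dotProduct_add] at h
    linarith [dotProduct_nonneg_of_nonneg hy hx]
  have hy0 : y = 0 := by
    by_contra hne
    have := hM.dotProduct_mulVec_pos hne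
    rw [star_trivial] at this
    linarith
  intro i
  simpa [hy_def] using congrFun hy0 i

theorem inv_nonneg [DecidableEq ι] (hZ : M.IsZMatrix) (hM : M.PosDef) (i j : ι) :
    0 ≤ M⁻¹ i j := by
  have hcol : M *ᵥ (M⁻¹ *ᵥ Pi.single j 1) = Pi.single j 1 := by
    rw [mulVec_mulVec, mul_nonsing_inv _ ((isUnit_iff_isUnit_det M).mp hM.isUnit), one_mulVec]
  have := hZ.nonneg_of_mulVec_nonneg hM (hcol ▸ Pi.single_nonneg.2 zero_le_one) i
  simpa [mulVec_single_one] using this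

theorem inv_le_inv_of_le [DecidableEq ι] {A B : Matrix ι ι ℝ} (hZ : B.IsZMatrix)
    (hA : A.PosDef) (hB : B.PosDef) (hAB : ∀ i j, A i j ≤ B i j) (i j : ι) :
    B⁻¹ i j ≤ A⁻¹ i j := by
  have hAZ : A.IsZMatrix := fun i j hij => (hAB i j).trans (hZ hij)
  have hres : A⁻¹ - B⁻¹ = A⁻¹ * (B - A) * B⁻¹ := inv_sub_inv (iff_of_true hA.isUnit hB.isUnit)
  have : 0 ≤ (A⁻¹ * (B - A) * B⁻¹) i j := by
    simp only [mul_apply]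
    refine Finset.sum_nonneg fun k _ => mul_nonneg (Finset.sum_nonneg fun l _ => ?_) ?_
    · exact mul_nonneg (hAZ.inv_nonneg hA i l) (sub_nonneg.2 (hAB l k))
    · exact hZ.inv_nonneg hB k j
  rwa [← hres, sub_apply, sub_nonneg] at this

theorem inv_add_diagonal_le [DecidableEq ι] (hZ : M.IsZMatrix) (hM : M.PosDef) {d : ι → ℝ}
    (hd : 0 ≤ d) (i j : ι) : (M + diagonal d)⁻¹ i j ≤ M⁻¹ i j := by
  refine (hZ.add_diagonal d).inv_le_inv_of_le hM (hM.add_posSemidef (.diagonal hd))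
    (fun k l => ?_) i j
  rcases eq_or_ne k l with rfl | hkl
  · simpa using hd k
  · simp [diagonal_apply_ne _ hkl]

end IsZMatrix

theorem trace_inv_sub_trace_inv_add_single {R : Type*} [CommRing R] [Fintype ι] [DecidableEq ι]
    {A : Matrix ι ι R} (u : ι) (w : R) (h : IsUnit A ↔ IsUnit (A + single u u w)) :
    A⁻¹.trace - (A + single u u w)⁻¹.trace = w * ∑ i, (A + single u u w)⁻¹ u i * A⁻¹ i u := by
  rw [← trace_sub, inv_sub_inv h, add_sub_cancel_left, trace_mul_cycle, trace_mul_single]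
  simp [mul_apply, mul_comm]

end Matrix

/-- Let `M` be an `n×n` real symmetric positive definite matrix with
nonpositive off-diagonal entries, `P` a nonnegative diagonal matrix, `w ≥ 0`, and `u` an
index. Then `Tr((M + P)⁻¹) − Tr((M + P + w E_{uu})⁻¹) ≤ Tr(M⁻¹) − Tr((M + w E_{uu})⁻¹)`. -/
theorem trace_inv_diff_supermodular {n : ℕ}
    (M : Matrix (Fin n) (Fin n) ℝ) (hM : M.PosDef)
    (hoff : ∀ i j : Fin n, i ≠ j → M i j ≤ 0)
    (p : Fin n → ℝ) (hp : ∀ i, 0 ≤ p i)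
    (w : ℝ) (hw : 0 ≤ w) (u : Fin n) :
    ((M + diagonal p)⁻¹).trace - ((M + diagonal p + Matrix.single u u w)⁻¹).trace ≤
      (M⁻¹).trace - ((M + Matrix.single u u w)⁻¹).trace := by
  have hZ : M.IsZMatrix := fun i j hij => hoff i j hij
  have hq : 0 ≤ (Pi.single u w : Fin n → ℝ) := Pi.single_nonneg.2 hw
  have hMP : (M + diagonal p).PosDef := hM.add_posSemidef (.diagonal hp)
  have hME : (M + single u u w).PosDef := diagonal_single u w ▸ hM.add_posSemidef (.diagonal hq)
  have hMEZ : (M + single u u w).IsZMatrix := diagonal_single u w ▸ hZ.add_diagonal _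
  have hcomm : M + diagonal p + single u u w = M + single u u w + diagonal p := add_right_comm ..
  have hMPE : (M + diagonal p + single u u w).PosDef := hcomm ▸ hME.add_posSemidef (.diagonal hp)
  rw [trace_inv_sub_trace_inv_add_single u w (iff_of_true hMP.isUnit hMPE.isUnit),
    trace_inv_sub_trace_inv_add_single u w (iff_of_true hM.isUnit hME.isUnit), hcomm]
  refine mul_le_mul_of_nonneg_left (Finset.sum_le_sum fun i _ => mul_le_mul ?_ ?_ ?_ ?_) hw
  · exact hMEZ.inv_add_diagonal_le hME hp u i
  · exact hZ.inv_add_diagonal_le hM hp i u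
  · exact (hZ.add_diagonal p).inv_nonneg hMP i u
  · exact hMEZ.inv_nonneg hME u i
end

section
/- (Theorem 3, greedy guarantee.) Let X be a finite set, let k ≥ 1 with k ≤ |X|, and let f : (subsets of X) → ℝ be monotone decreasing (S ⊆ T implies f(T) ≤ f(S)) and supermodular (for all S ⊆ T ⊆ X and a ∈ X \ T, f(S) − f(S ∪ {a}) ≥ f(T) − f(T ∪ {a})). Let S_0 = ∅ and, for i = 1,…,k, let e_i ∈ X \ S_{i−1} satisfy f(S_{i−1}) − f(S_{i−1} ∪ {e_i}) ≥ f(S_{i−1}) − f(S_{i−1} ∪ {e}) for all e ∈ X \ S_{i−1}, and set S_i = S_{i−1} ∪ {e_i}. Then for every S* ⊆ X with |S*| = k, f(∅) − f(S_k) ≥ (1 − 1/e)·(f(∅) − f(S*)). -/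
open Finset

lemma telescope_bound {α : Type*} [DecidableEq α]
    (f : Finset α → ℝ)
    (hsuper : ∀ S T : Finset α, S ⊆ T → ∀ a : α, a ∉ T →
      f T - f (insert a T) ≤ f S - f (insert a S))
    (Si : Finset α) (T : Finset α) :
    f Si - f (Si ∪ T) ≤ ∑ a ∈ T \ Si, (f Si - f (insert a Si)) := by
  induction T using Finset.induction_on with
  | empty => simp
  | @insert b T hb ih =>
    by_cases hbS : b ∈ Si
    · rw [Finset.insert_sdiff_of_mem _ hbS]
      have : Si ∪ insert b T = Si ∪ T := by
        rw [Finset.union_insert, Finset.insert_eq_self.2 (Finset.mem_union_left _ hbS)]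
      rw [this]; exact ih
    · rw [Finset.insert_sdiff_of_notMem _ hbS,
        Finset.sum_insert (by simp [hb])]
      have hbST : b ∉ Si ∪ T := by simp [hb, hbS]
      have h2 := hsuper Si (Si ∪ T) Finset.subset_union_left b hbST
      have : Si ∪ insert b T = insert b (Si ∪ T) := by
        rw [Finset.union_insert]
      rw [this]
      linarith

/-- Theorem 3, greedy guarantee: Let `X` be a finite set (the universe of a
fintype `α`), `1 ≤ k ≤ |X|`, and `f` a monotone decreasing supermodular set function. If
`S 0 = ∅` and at each step `i = 0,…,k−1` the greedy algorithm picks `e i ∉ S i` maximizing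
the marginal decrease and sets `S (i+1) = insert (e i) (S i)`, then for every `S*` with
`|S*| = k`, `f(∅) − f(S k) ≥ (1 − 1/e) (f(∅) − f(S*))`. -/
theorem greedy_guarantee {α : Type*} [Fintype α] [DecidableEq α]
    (f : Finset α → ℝ)
    (hmono : ∀ S T : Finset α, S ⊆ T → f T ≤ f S)
    (hsuper : ∀ S T : Finset α, S ⊆ T → ∀ a : α, a ∉ T →
      f T - f (insert a T) ≤ f S - f (insert a S))
    (k : ℕ) (hk1 : 1 ≤ k) (hk : k ≤ Fintype.card α)
    (S : ℕ → Finset α) (e : ℕ → α)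
    (hS0 : S 0 = ∅)
    (hgreedy : ∀ i < k, e i ∉ S i ∧ S (i + 1) = insert (e i) (S i) ∧
      ∀ a : α, a ∉ S i →
        f (S i) - f (insert a (S i)) ≤ f (S i) - f (insert (e i) (S i)))
    (Sstar : Finset α) (hstar : Sstar.card = k) :
    (1 - 1 / Real.exp 1) * (f ∅ - f Sstar) ≤ f ∅ - f (S k) := by
  have hkpos : (0:ℝ) < k := by exact_mod_cast hk1
  have hkc : (0:ℝ) ≤ 1 - 1/k := by
    rw [sub_nonneg, div_le_one hkpos]; exact_mod_cast hk1
  have hstep : ∀ i < k, f (S i) - f Sstar ≤ k * (f (S i) - f (S (i+1))) := by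
    intro i hi
    obtain ⟨hei, hSi1, hmax⟩ := hgreedy i hi
    have hM0 : 0 ≤ f (S i) - f (insert (e i) (S i)) :=
      sub_nonneg.2 (hmono _ _ (Finset.subset_insert _ _))
    have h1 := telescope_bound f hsuper (S i) Sstar
    have h2 : ∑ a ∈ Sstar \ S i, (f (S i) - f (insert a (S i))) ≤
        ((Sstar \ S i).card : ℝ) * (f (S i) - f (insert (e i) (S i))) := by
      rw [← nsmul_eq_mul]
      apply Finset.sum_le_card_nsmul
      intro a ha
      exact hmax a (Finset.mem_sdiff.1 ha).2
    have hcard : ((Sstar \ S i).card : ℝ) ≤ k := by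
      have : (Sstar \ S i).card ≤ Sstar.card := Finset.card_le_card (Finset.sdiff_subset)
      exact_mod_cast hstar ▸ this
    have h3 : ((Sstar \ S i).card : ℝ) * (f (S i) - f (insert (e i) (S i))) ≤
        k * (f (S i) - f (insert (e i) (S i))) :=
      mul_le_mul_of_nonneg_right hcard hM0
    have h4 : f (S i ∪ Sstar) ≤ f Sstar := hmono _ _ Finset.subset_union_right
    rw [hSi1]
    linarith
  have hδ : ∀ i ≤ k, f (S i) - f Sstar ≤ (1 - 1/(k:ℝ))^i * (f (S 0) - f Sstar) := by
    intro i
    induction i with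
    | zero => intro _; simp
    | succ i ih =>
      intro hik
      have hi : i < k := hik
      have IH := ih (le_of_lt hi)
      have h1 : f (S (i+1)) - f Sstar ≤ (1 - 1/(k:ℝ)) * (f (S i) - f Sstar) := by
        have heq : (1 - 1/(k:ℝ)) = ((k:ℝ) - 1)/k := by field_simp
        rw [heq, div_mul_eq_mul_div, le_div_iff₀ hkpos]
        have := hstep i hi
        nlinarith
      calc f (S (i+1)) - f Sstar ≤ (1 - 1/(k:ℝ)) * (f (S i) - f Sstar) := h1
        _ ≤ (1 - 1/(k:ℝ)) * ((1 - 1/(k:ℝ))^i * (f (S 0) - f Sstar)) :=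
            mul_le_mul_of_nonneg_left IH hkc
        _ = (1 - 1/(k:ℝ))^(i+1) * (f (S 0) - f Sstar) := by ring
  have hfinal := hδ k le_rfl
  rw [hS0] at hfinal
  have hδ0 : 0 ≤ f (∅ : Finset α) - f Sstar :=
    sub_nonneg.2 (hmono _ _ (Finset.empty_subset _))
  have hpow : (1 - 1/(k:ℝ))^k ≤ 1 / Real.exp 1 := by
    have h1 : 1 - 1/(k:ℝ) ≤ Real.exp (-(1/k)) := by
      have := Real.add_one_le_exp (-(1/(k:ℝ)))
      linarith
    have h2 : (1 - 1/(k:ℝ))^k ≤ (Real.exp (-(1/k)))^k :=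
      pow_le_pow_left₀ hkc h1 k
    have h3 : (Real.exp (-(1/(k:ℝ))))^k = Real.exp (-1) := by
      rw [← Real.exp_nat_mul]
      congr 1
      field_simp
    rw [h3, Real.exp_neg, ← one_div] at h2
    exact h2
  have := mul_le_mul_of_nonneg_right hpow hδ0
  nlinarith
end

section
/- (Theorem 4, approximate greedy guarantee.) Let X be a finite set, let k ≥ 1 with k ≤ |X|, let 0 < ε ≤ 1/2, and let f : (subsets of X) → ℝ be monotone decreasing and supermodular. Let S_0 = ∅ and, for i = 1,…,k, let e_i ∈ X \ S_{i−1} satisfy f(S_{i−1}) − f(S_{i−1} ∪ {e_i}) ≥ (1 − ε)·( f(S_{i−1}) − f(S_{i−1} ∪ {e}) ) for all e ∈ X \ S_{i−1}, and set S_i = S_{i−1} ∪ {e_i}. Then for every S* ⊆ X with |S*| = k, f(∅) − f(S_k) ≥ (1 − 1/e − ε)·(f(∅) − f(S*)). -/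
open Finset

/-!
Write `Δᵢ = f(Sᵢ) − f(S*)`. Supermodularity bounds `Δᵢ` by the sum of the marginal decreases at
`Sᵢ` of the at most `k` elements of `S* \ Sᵢ`, each of which is at most `1/(1 − ε)` times the
decrease achieved by the greedy step. Hence `Δᵢ₊₁ ≤ (1 − (1 − ε)/k) Δᵢ`, so
`Δₖ ≤ (1 − (1 − ε)/k)ᵏ Δ₀ ≤ e^(ε − 1) Δ₀ ≤ (1/e + ε) Δ₀`, the last step by convexity of `exp`.
-/

section

variable {α : Type*} [DecidableEq α]

def IsSupermodular (f : Finset α → ℝ) : Prop :=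
  ∀ S T : Finset α, S ⊆ T → ∀ a : α, a ∉ T → f T - f (insert a T) ≤ f S - f (insert a S)

namespace IsSupermodular

variable {f : Finset α → ℝ}

theorem sub_union_le_sum_of_disjoint (hf : IsSupermodular f) (B : Finset α) {U : Finset α}
    (hBU : Disjoint B U) : f B - f (B ∪ U) ≤ ∑ a ∈ U, (f B - f (insert a B)) := by
  induction U using Finset.induction_on with
  | empty => simp
  | @insert a U ha ih =>
    have haB : a ∉ B := fun h => disjoint_left.1 hBU h (mem_insert_self a U)
    have hstep := hf B (B ∪ U) subset_union_left a (by simp [haB, ha])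
    rw [union_insert, sum_insert ha]
    linarith [ih (disjoint_of_subset_right (subset_insert a U) hBU)]

theorem sub_union_le_sum_sdiff (hf : IsSupermodular f) (B T : Finset α) :
    f B - f (B ∪ T) ≤ ∑ a ∈ T \ B, (f B - f (insert a B)) := by
  simpa only [union_sdiff_self_eq_union] using hf.sub_union_le_sum_of_disjoint B disjoint_sdiff

theorem one_sub_mul_gap_le_of_approx_greedy (hf : IsSupermodular f) (hanti : Antitone f)
    {ε : ℝ} (hε : ε ≤ 1) {k : ℕ} {B T : Finset α} (hT : #T ≤ k) {e : α}
    (hgreedy : ∀ a ∉ B, (1 - ε) * (f B - f (insert a B)) ≤ f B - f (insert e B)) :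
    (1 - ε) * (f B - f T) ≤ k * (f B - f (insert e B)) := by
  have hgain : 0 ≤ f B - f (insert e B) := sub_nonneg.2 (hanti (subset_insert e B))
  have hcard : (#(T \ B) : ℝ) ≤ k := by exact_mod_cast (card_le_card sdiff_subset).trans hT
  calc (1 - ε) * (f B - f T)
      ≤ (1 - ε) * ∑ a ∈ T \ B, (f B - f (insert a B)) := by
        have hunion : f (B ∪ T) ≤ f T := hanti subset_union_right
        exact mul_le_mul_of_nonneg_left (by linarith [hf.sub_union_le_sum_sdiff B T])
          (by linarith)
    _ = ∑ a ∈ T \ B, (1 - ε) * (f B - f (insert a B)) := mul_sum _ _ _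
    _ ≤ ∑ _a ∈ T \ B, (f B - f (insert e B)) :=
        sum_le_sum fun a ha => hgreedy a (mem_sdiff.1 ha).2
    _ = #(T \ B) * (f B - f (insert e B)) := by rw [sum_const, nsmul_eq_mul]
    _ ≤ k * (f B - f (insert e B)) := by gcongr

end IsSupermodular

end

theorem Real.exp_sub_one_le_inv_exp_add {ε : ℝ} (hε₀ : 0 ≤ ε) (hε₁ : ε ≤ 1) :
    Real.exp (ε - 1) ≤ 1 / Real.exp 1 + ε := by
  have hconv := convexOn_exp.2 (Set.mem_univ 0) (Set.mem_univ 1) (sub_nonneg.2 hε₁) hε₀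
    (sub_add_cancel 1 ε)
  simp only [smul_eq_mul, mul_zero, mul_one, zero_add, Real.exp_zero] at hconv
  rw [Real.exp_sub, div_le_iff₀ (Real.exp_pos 1), add_mul,
    one_div_mul_cancel (Real.exp_ne_zero 1)]
  nlinarith [Real.exp_pos 1]

theorem one_sub_div_pow_le_inv_exp_add {ε : ℝ} (hε₀ : 0 ≤ ε) (hε₁ : ε ≤ 1) {k : ℕ}
    (hk : 1 ≤ k) : (1 - (1 - ε) / k) ^ k ≤ 1 / Real.exp 1 + ε := by
  have hk' : (1 : ℝ) ≤ k := by exact_mod_cast hk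
  calc (1 - (1 - ε) / k) ^ k ≤ Real.exp (-(1 - ε)) :=
        Real.one_sub_div_pow_le_exp_neg (by linarith)
    _ = Real.exp (ε - 1) := by rw [neg_sub]
    _ ≤ 1 / Real.exp 1 + ε := Real.exp_sub_one_le_inv_exp_add hε₀ hε₁

theorem approximate_greedy_guarantee_general {α : Type*} [DecidableEq α]
    (f : Finset α → ℝ)
    (hmono : ∀ S T : Finset α, S ⊆ T → f T ≤ f S)
    (hsuper : ∀ S T : Finset α, S ⊆ T → ∀ a : α, a ∉ T →
      f T - f (insert a T) ≤ f S - f (insert a S))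
    (k : ℕ) (hk1 : 1 ≤ k)
    (ε : ℝ) (hε : 0 < ε) (hε' : ε ≤ 1 / 2)
    (S : ℕ → Finset α) (e : ℕ → α)
    (hS0 : S 0 = ∅)
    (hgreedy : ∀ i < k, e i ∉ S i ∧ S (i + 1) = insert (e i) (S i) ∧
      ∀ a : α, a ∉ S i →
        (1 - ε) * (f (S i) - f (insert a (S i))) ≤
          f (S i) - f (insert (e i) (S i)))
    (Sstar : Finset α) (hstar : Sstar.card = k) :
    (1 - 1 / Real.exp 1 - ε) * (f ∅ - f Sstar) ≤ f ∅ - f (S k) := by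
  have hanti : Antitone f := fun S T h => hmono S T h
  have hk : (1 : ℝ) ≤ k := by exact_mod_cast hk1
  set c : ℝ := 1 - (1 - ε) / k
  have hc : 0 ≤ c := by
    rw [sub_nonneg, div_le_one (by linarith)]
    linarith
  have hstep : ∀ i < k, f (S (i + 1)) - f Sstar ≤ c * (f (S i) - f Sstar) := by
    intro i hi
    obtain ⟨-, hnext, hbest⟩ := hgreedy i hi
    have hgain := IsSupermodular.one_sub_mul_gap_le_of_approx_greedy hsuper hanti
      (by linarith) hstar.le hbest
    have hfraction : (1 - ε) / k * (f (S i) - f Sstar) ≤ f (S i) - f (insert (e i) (S i)) := by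
      rw [div_mul_eq_mul_div, div_le_iff₀ (by linarith)]
      linarith
    rw [hnext]
    linarith
  have hgap := le_geom (u := fun i => f (S i) - f Sstar) hc k hstep
  have hpow : c ^ k ≤ 1 / Real.exp 1 + ε :=
    one_sub_div_pow_le_inv_exp_add hε.le (by linarith) hk1
  have hgap₀ : 0 ≤ f ∅ - f Sstar := sub_nonneg.2 (hmono ∅ Sstar (empty_subset _))
  rw [hS0] at hgap
  linarith [mul_le_mul_of_nonneg_right hpow hgap₀]

/-- Theorem 4, approximate greedy guarantee: Let `X` be a finite set (the
universe of a fintype `α`), `1 ≤ k ≤ |X|`, `0 < ε ≤ 1/2`, and `f` a monotone decreasing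
supermodular set function. If `S 0 = ∅` and at each step `i = 0,…,k−1` the algorithm picks
`e i ∉ S i` whose marginal decrease is at least `(1 − ε)` times every marginal decrease,
setting `S (i+1) = insert (e i) (S i)`, then for every `S*` with `|S*| = k`,
`f(∅) − f(S k) ≥ (1 − 1/e − ε) (f(∅) − f(S*))`. -/
theorem approximate_greedy_guarantee {α : Type*} [Fintype α] [DecidableEq α]
    (f : Finset α → ℝ)
    (hmono : ∀ S T : Finset α, S ⊆ T → f T ≤ f S)
    (hsuper : ∀ S T : Finset α, S ⊆ T → ∀ a : α, a ∉ T →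
      f T - f (insert a T) ≤ f S - f (insert a S))
    (k : ℕ) (hk1 : 1 ≤ k) (hk : k ≤ Fintype.card α)
    (ε : ℝ) (hε : 0 < ε) (hε' : ε ≤ 1 / 2)
    (S : ℕ → Finset α) (e : ℕ → α)
    (hS0 : S 0 = ∅)
    (hgreedy : ∀ i < k, e i ∉ S i ∧ S (i + 1) = insert (e i) (S i) ∧
      ∀ a : α, a ∉ S i →
        (1 - ε) * (f (S i) - f (insert a (S i))) ≤
          f (S i) - f (insert (e i) (S i)))
    (Sstar : Finset α) (hstar : Sstar.card = k) :
    (1 - 1 / Real.exp 1 - ε) * (f ∅ - f Sstar) ≤ f ∅ - f (S k) :=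
  approximate_greedy_guarantee_general f hmono hsuper k hk1 ε hε hε' S e hS0 hgreedy Sstar hstar
end
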